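/- Let Θ be a nonempty set, let f_1, …, f_N : Θ → ℝ, and let z ∈ ℝ^N be a utopia reference point satisfying z_i > f_i(θ) for all θ ∈ Θ and all i. Suppose θ̄ ∈ Θ is weakly Pareto optimal, i.e., there is no θ ∈ Θ with f_i(θ) > f_i(θ̄) for all i. Define λ_i = (z_i − f_i(θ̄))^{-1} / ∑_{j=1}^N (z_j − f_j(θ̄))^{-1}, so that λ lies in the standard simplex Δ_N with λ_i > 0. Then θ̄ minimizes max_{1≤i≤N} λ_i (z_i − f_i(θ)) over θ ∈ Θ. -/

import Mathlib

/-! With the weights `λ i ∝ (z i − f i θ̄)⁻¹` every weighted gap `λ i (z i − f i θ̄)` equals the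
same constant, so the Tchebycheff value of `θ̄` is that constant. For any other `θ`, weak Pareto
optimality of `θ̄` gives a coordinate `i` with `f i θ ≤ f i θ̄`, and there the weighted gap of `θ`
is already at least the constant. -/

theorem inv_div_sum_inv_mul_self {K ι : Type*} [Field K] [Fintype ι] (a : ι → K) {i : ι}
    (ha : a i ≠ 0) : (a i)⁻¹ / (∑ j, (a j)⁻¹) * a i = (∑ j, (a j)⁻¹)⁻¹ := by
  rw [div_mul_eq_mul_div, inv_mul_cancel₀ ha, one_div]

theorem ciSup_weighted_le_of_balanced {ι : Type*} [Finite ι] {w a b : ι → ℝ}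
    (hbal : ∀ j k, w j * a j = w k * a k) {i : ι} (hw : 0 ≤ w i) (hab : a i ≤ b i) :
    ⨆ j, w j * a j ≤ ⨆ j, w j * b j := by
  have : Nonempty ι := ⟨i⟩
  refine ciSup_le fun j => le_ciSup_of_le (Finite.bddAbove_range _) i ?_
  calc w j * a j = w i * a i := hbal j i
    _ ≤ w i * b i := mul_le_mul_of_nonneg_left hab hw

theorem tchebycheff_covers_weak_pareto_general (N : ℕ) (Θ : Type*)
    (f : Fin N → Θ → ℝ) (z : Fin N → ℝ)
    (hz : ∀ θ : Θ, ∀ i, f i θ < z i)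
    (θb : Θ) (hwpo : ¬ ∃ θ : Θ, ∀ i, f i θb < f i θ)
    (l : Fin N → ℝ)
    (hl : ∀ i, l i = (z i - f i θb)⁻¹ / ∑ j, (z j - f j θb)⁻¹) :
    ∀ θ : Θ, (⨆ i, l i * (z i - f i θb)) ≤ ⨆ i, l i * (z i - f i θ) := by
  intro θ
  obtain ⟨i, hi⟩ : ∃ i, f i θ ≤ f i θb := by
    simpa only [not_forall, not_lt] using not_exists.1 hwpo θ
  have hgap : ∀ j, 0 < z j - f j θb := fun j => sub_pos.2 (hz θb j)
  have hbal : ∀ j k, l j * (z j - f j θb) = l k * (z k - f k θb) := fun j k => by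
    rw [hl, hl]
    exact (inv_div_sum_inv_mul_self (fun j => z j - f j θb) (hgap j).ne').trans
      (inv_div_sum_inv_mul_self (fun j => z j - f j θb) (hgap k).ne').symm
  have hw : 0 ≤ l i := by
    rw [hl]
    exact div_nonneg (inv_nonneg.2 (hgap i).le)
      (Finset.sum_nonneg fun j _ => inv_nonneg.2 (hgap j).le)
  exact ciSup_weighted_le_of_balanced hbal hw (by linarith)

/-- Coverage direction of Tchebycheff scalarization: given a utopia point `z` with
`z i > f i θ` for all `θ, i`, every weakly Pareto optimal `θ̄` minimizes
`max_i λ i * (z i − f i θ)` for the normalized weights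
`λ i = (z i − f i θ̄)⁻¹ / ∑ j (z j − f j θ̄)⁻¹`. -/
theorem tchebycheff_covers_weak_pareto (N : ℕ) (hN : 1 ≤ N) (Θ : Type*)
    (f : Fin N → Θ → ℝ) (z : Fin N → ℝ)
    (hz : ∀ θ : Θ, ∀ i, f i θ < z i)
    (θb : Θ) (hwpo : ¬ ∃ θ : Θ, ∀ i, f i θb < f i θ)
    (l : Fin N → ℝ)
    (hl : ∀ i, l i = (z i - f i θb)⁻¹ / ∑ j, (z j - f j θb)⁻¹) :
    ∀ θ : Θ, (⨆ i, l i * (z i - f i θb)) ≤ ⨆ i, l i * (z i - f i θ) :=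
  tchebycheff_covers_weak_pareto_general N Θ f z hz θb hwpo l hl
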